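/- arXiv:1811.07614 — 3 statements merged into one kernel-verified Lean document; each statement's English description precedes it below -/
import Mathlib

section
/- For every integer n ≥ 2, there are at least n! + 1 distinct submonoids of cardinality n! of the monoid of all functions Z_n → Z_n under composition. Specifically, the n! sets {σ∘h∘σ⁻¹ : h ∈ M_n}, one for each permutation σ of Z_n, are pairwise distinct submonoids each of cardinality n!, and the symmetric group S_n is a further submonoid of cardinality n! distinct from all of them. -/
/-!
`conjM n σ` consists of the maps that decrease the linear order on `Z_n` transported along `σ`,
so it is closed under composition and is in bijection with `M_n`, which has `∏ (i + 1) = n!`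
elements. The order can be read back from the submonoid: `σ x` precedes `σ y` exactly when the
map sending `σ y` to `σ x` and fixing everything else lies in `conjM n σ`. So equal
conjugates force `τ⁻¹ ∘ σ` to be a monotone bijection of `Z_n`, i.e. `σ = τ`. Finally every
`conjM n σ` contains a constant map, which is not bijective once `n ≥ 2`.
-/

open Function Nat

/-- A subset of `Z_n → Z_n` which contains the identity and is closed under
composition, i.e. a submonoid of the composition monoid `Z_n^{Z_n}`. -/
def IsSubmonoidSet {n : ℕ} (S : Set (Fin n → Fin n)) : Prop :=
  (id ∈ S) ∧ ∀ f ∈ S, ∀ g ∈ S, f ∘ g ∈ S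

/-- The `σ`-conjugate `{σ∘h∘σ⁻¹ : h ∈ M_n}` of `M_n = {h | ∀ i, h i ≤ i}`. -/
def conjM (n : ℕ) (σ : Equiv.Perm (Fin n)) : Set (Fin n → Fin n) :=
  (fun h => ⇑σ ∘ h ∘ ⇑σ.symm) '' {h : Fin n → Fin n | ∀ i : Fin n, h i ≤ i}

section Conjugates

variable {n : ℕ}

lemma mem_conjM_iff {σ : Equiv.Perm (Fin n)} {f : Fin n → Fin n} :
    f ∈ conjM n σ ↔ ∀ j, σ.symm (f j) ≤ σ.symm j := by
  constructor
  · rintro ⟨h, hh, rfl⟩ j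
    simpa using hh (σ.symm j)
  · intro hf
    refine ⟨⇑σ.symm ∘ f ∘ ⇑σ, fun i => by simpa using hf (σ i), ?_⟩
    funext i
    simp

lemma isSubmonoidSet_conjM (σ : Equiv.Perm (Fin n)) : IsSubmonoidSet (conjM n σ) :=
  ⟨mem_conjM_iff.2 fun _ => le_rfl, fun _ hf g hg =>
    mem_conjM_iff.2 fun j => (mem_conjM_iff.1 hf (g j)).trans (mem_conjM_iff.1 hg j)⟩

lemma card_setOf_forall_apply_le (n : ℕ) :
    Nat.card {h : Fin n → Fin n | ∀ i, h i ≤ i} = n ! := by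
  calc Nat.card {h : Fin n → Fin n | ∀ i, h i ≤ i}
      = Nat.card (∀ i : Fin n, Set.Iic i) :=
        Nat.card_congr (Equiv.subtypePiEquivPi (p := fun i j => j ∈ Set.Iic i))
    _ = ∏ i : Fin n, ((i : ℕ) + 1) := by simp
    _ = n ! := by
      rw [Fin.prod_univ_eq_prod_range (· + 1), Finset.prod_range_add_one_eq_factorial]

lemma card_conjM (σ : Equiv.Perm (Fin n)) : Nat.card (conjM n σ) = n ! := by
  exact (Nat.card_image_of_injective (Equiv.arrowCongr σ σ).injective _).trans
    (card_setOf_forall_apply_le n)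

lemma update_id_mem_conjM (σ : Equiv.Perm (Fin n)) {x y : Fin n} (hxy : x ≤ y) :
    update id (σ y) (σ x) ∈ conjM n σ := by
  refine mem_conjM_iff.2 fun j => ?_
  by_cases hj : j = σ y
  · subst hj
    simpa using hxy
  · simp [hj]

lemma monotone_of_conjM_subset {σ τ : Equiv.Perm (Fin n)} (h : conjM n σ ⊆ conjM n τ) :
    Monotone (τ.symm ∘ σ) := fun x y hxy => by
  simpa using mem_conjM_iff.1 (h (update_id_mem_conjM σ hxy)) (σ y)

lemma conjM_injective (n : ℕ) : Injective (conjM n) := fun σ τ h => by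
  have hmono : StrictMono (τ.symm ∘ σ) :=
    (monotone_of_conjM_subset h.subset).strictMono_of_injective
      (τ.symm.injective.comp σ.injective)
  exact Equiv.ext fun x => τ.symm_apply_eq.1 hmono.apply_eq

lemma const_mem_conjM [NeZero n] (σ : Equiv.Perm (Fin n)) :
    (fun _ => σ 0) ∈ conjM n σ :=
  mem_conjM_iff.2 fun j => by simp

end Conjugates

lemma isSubmonoidSet_setOf_bijective (n : ℕ) :
    IsSubmonoidSet {f : Fin n → Fin n | Bijective f} :=
  ⟨bijective_id, fun _ hf _ hg => hf.comp hg⟩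

lemma Nat.card_setOf_bijective (α β : Type*) :
    Nat.card {f : α → β | Bijective f} = Nat.card (α ≃ β) :=
  Nat.card_congr (Equiv.bijectiveEquiv)

lemma setOf_bijective_ne_conjM {n : ℕ} (hn : 2 ≤ n) (σ : Equiv.Perm (Fin n)) :
    {f : Fin n → Fin n | Bijective f} ≠ conjM n σ := by
  have : NeZero n := ⟨by omega⟩
  have : Nontrivial (Fin n) := Fin.nontrivial_iff_two_le.2 hn
  intro h
  have hconst := const_mem_conjM σ
  rw [← h] at hconst
  exact not_injective_const hconst.1

/-- Proposition 3, part 1 (Submonoid sizes): the `n!` pairwise distinct conjugates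
of `M_n` are submonoids of cardinality `n!`, and `S_n` is a further submonoid of
cardinality `n!` distinct from all of them — so at least `n! + 1` distinct
submonoids of cardinality `n!`. -/
theorem submonoid_sizes_part1 (n : ℕ) (hn : 2 ≤ n) :
    (∀ σ : Equiv.Perm (Fin n),
        IsSubmonoidSet (conjM n σ) ∧ Nat.card (conjM n σ) = Nat.factorial n) ∧
      Function.Injective (conjM n) ∧
      IsSubmonoidSet {f : Fin n → Fin n | Function.Bijective f} ∧
      Nat.card {f : Fin n → Fin n | Function.Bijective f} = Nat.factorial n ∧
      ∀ σ : Equiv.Perm (Fin n),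
        {f : Fin n → Fin n | Function.Bijective f} ≠ conjM n σ := by
  refine ⟨fun σ => ⟨isSubmonoidSet_conjM σ, card_conjM σ⟩, conjM_injective n,
    isSubmonoidSet_setOf_bijective n, ?_, setOf_bijective_ne_conjM hn⟩
  rw [Nat.card_setOf_bijective, ← Equiv.Perm, Nat.card_perm, Nat.card_fin]
end

section
/- For every integer n ≥ 1, the cardinality of the set S_n ∪ (⋃_{σ ∈ S_n} {σ∘h∘σ⁻¹ : h ∈ M_n}), as a set of functions from Z_n to Z_n, equals (n+1)^(n−1) + n! − 1. -/
open Finset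

theorem Nat.sum_range_pow_mul_choose_pred (n : ℕ) :
    ∑ d ∈ range (n + 1), n ^ d * (n - 1).choose d = (n + 1) ^ (n - 1) :=
  calc ∑ d ∈ range (n + 1), n ^ d * (n - 1).choose d
      = ∑ d ∈ range (n - 1 + 1), n ^ d * (n - 1).choose d := by
        refine (sum_subset (range_subset_range.mpr (by omega)) fun d _ hd => ?_).symm
        rw [Nat.choose_eq_zero_of_lt (by simpa using hd), mul_zero]
    _ = (n + 1) ^ (n - 1) := by simp [add_pow]

namespace Function

variable {α : Type*} {f : α → α} {x y z : α}

theorem IsPeriodicPt.eq_of_isFixedPt_iterate {p i : ℕ} (hz : IsPeriodicPt f p z) (hp : 0 < p)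
    (hfix : IsFixedPt f (f^[i] z)) : f^[i] z = z :=
  calc f^[i] z = f^[p * i - i] (f^[i] z) := (iterate_fixed hfix _).symm
    _ = f^[p * i] z := by
      rw [← iterate_add_apply, Nat.sub_add_cancel (Nat.le_mul_of_pos_left i hp)]
    _ = z := (hz.mul_const i).eq

theorem IsFixedPt.iterate_eq_of_isFixedPt_iterate {i j : ℕ} (hi : IsFixedPt f (f^[i] z))
    (hj : IsFixedPt f (f^[j] z)) : f^[i] z = f^[j] z :=
  calc f^[i] z = f^[j] (f^[i] z) := (iterate_fixed hi j).symm
    _ = f^[i] (f^[j] z) := by rw [← iterate_add_apply, ← iterate_add_apply, Nat.add_comm]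
    _ = f^[j] z := iterate_fixed hj i

theorem exists_iterate_mem_periodicPts [Finite α] (f : α → α) (z : α) :
    ∃ k, f^[k] z ∈ periodicPts f := by
  obtain ⟨a, b, hab, h⟩ := Set.finite_univ.exists_lt_map_eq_of_forall_mem
    (f := fun k => f^[k] z) fun _ => Set.mem_univ _
  refine ⟨a, mk_mem_periodicPts (Nat.sub_pos_of_lt hab) ?_⟩
  change f^[b - a] (f^[a] z) = f^[a] z
  rw [← iterate_add_apply, Nat.sub_add_cancel hab.le, h]

section Update

variable [DecidableEq α]

theorem iterate_update_of_forall_ne {k : ℕ} (h : ∀ i < k, f^[i] z ≠ x) :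
    (update f x y)^[k] z = f^[k] z := by
  induction k with
  | zero => rfl
  | succ k ih =>
    rw [iterate_succ_apply', iterate_succ_apply', ih fun i hi => h i (by omega),
      update_of_ne (h k k.lt_succ_self)]

theorem exists_iterate_update_eq_of_exists_iterate_eq (h : ∃ k, f^[k] z = x) :
    ∃ k, (update f x y)^[k] z = x := by
  refine ⟨Nat.find h, ?_⟩
  rw [iterate_update_of_forall_ne fun i hi => Nat.find_min h hi]
  exact Nat.find_spec h

/-- Orbits of `f` and `update f x y` agree until they first hit `x`. -/
theorem exists_iterate_update_eq_iff : (∃ k, (update f x y)^[k] z = x) ↔ ∃ k, f^[k] z = x :=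
  ⟨fun h => by simpa using exists_iterate_update_eq_of_exists_iterate_eq (y := f x) h,
    exists_iterate_update_eq_of_exists_iterate_eq⟩

end Update

/-- `f` is acyclic when its functional graph has no cycles other than loops, i.e. it is a rooted
forest whose roots are the fixed points of `f`. -/
def IsAcyclic (f : α → α) : Prop := periodicPts f ⊆ fixedPoints f

theorem isAcyclic_id : IsAcyclic (id : α → α) := fun x _ => isFixedPt_id x

theorem isAcyclic_of_le_id [PartialOrder α] (h : ∀ x, f x ≤ x) : IsAcyclic f := by
  rintro z ⟨p, hp, hpz⟩
  obtain ⟨q, rfl⟩ : ∃ q, p = q + 1 := ⟨p - 1, by omega⟩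
  refine le_antisymm (h z) ?_
  calc z = f^[q] (f z) := hpz.eq.symm
    _ ≤ f z := iterate_le_id_of_le_id h q (f z)

theorem IsAcyclic.conj {β : Type*} (hf : IsAcyclic f) (σ : α ≃ β) :
    IsAcyclic (σ ∘ f ∘ σ.symm) := by
  intro z hz
  have hsemi : Semiconj σ.symm (σ ∘ f ∘ σ.symm) f := fun _ => by simp
  have := hf (hsemi.mapsTo_periodicPts hz)
  simp_all [IsFixedPt]

theorem IsAcyclic.eq_id_of_injective [Finite α] (hf : IsAcyclic f) (hinj : Injective f) :
    f = id :=
  funext fun x => hf (hinj.mem_periodicPts x)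

theorem IsAcyclic.exists_isFixedPt_iterate [Finite α] (hf : IsAcyclic f) (z : α) :
    ∃ k, IsFixedPt f (f^[k] z) :=
  (exists_iterate_mem_periodicPts f z).imp fun _ hk => hf hk

theorem IsAcyclic.exists_rank [Finite α] (hf : IsAcyclic f) :
    ∃ r : α → ℕ, ∀ x, f x ≠ x → r (f x) < r x := by
  classical
  refine ⟨fun x => Nat.find (hf.exists_isFixedPt_iterate x), fun x hx => ?_⟩
  have hpos : Nat.find (hf.exists_isFixedPt_iterate x) ≠ 0 := by
    intro h0
    have hfix := Nat.find_spec (hf.exists_isFixedPt_iterate x)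
    rw [h0] at hfix
    exact hx hfix
  refine lt_of_le_of_lt (Nat.find_le ?_) (Nat.pred_lt hpos)
  rw [← iterate_succ_apply, Nat.succ_pred hpos]
  exact Nat.find_spec (hf.exists_isFixedPt_iterate x)

section Update

variable [DecidableEq α]

theorem IsAcyclic.update_apply_eq (hf : IsAcyclic f) (hz : z ∈ periodicPts (update f x y))
    (h : ∀ k, f^[k] z ≠ x) : update f x y z = z := by
  obtain ⟨p, hp, hpz⟩ := hz
  have hfz : IsPeriodicPt f p z := by
    rwa [IsPeriodicPt, IsFixedPt, ← iterate_update_of_forall_ne (y := y) fun i _ => h i]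
  have hzx : z ≠ x := h 0
  rw [update_of_ne hzx, hf (mk_mem_periodicPts hp hfz)]

theorem IsAcyclic.update_self (hf : IsAcyclic f) (x : α) : IsAcyclic (update f x x) := by
  intro z hz
  by_cases hx : ∀ k, f^[k] z ≠ x
  · exact hf.update_apply_eq hz hx
  obtain ⟨k, hk⟩ := exists_iterate_update_eq_iff.mpr (not_forall_not.mp hx)
  obtain ⟨p, hp, hpz⟩ := hz
  have hfix : IsFixedPt (update f x x) ((update f x x)^[k] z) := by
    rw [hk]; exact Function.update_self x x f
  rw [← hpz.eq_of_isFixedPt_iterate hp hfix]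
  exact hfix

theorem IsAcyclic.update_of_forall_iterate_ne (hf : IsAcyclic f) (hy : ∀ k, f^[k] y ≠ x) :
    IsAcyclic (update f x y) := by
  intro z hz
  by_cases hx : ∀ k, f^[k] z ≠ x
  · exact hf.update_apply_eq hz hx
  obtain ⟨k, hk⟩ := exists_iterate_update_eq_iff.mpr (not_forall_not.mp hx)
  obtain ⟨p, hp, hpz⟩ := hz
  obtain ⟨q, rfl⟩ : ∃ q, p = q + 1 := ⟨p - 1, by omega⟩
  have hxy : (update f x y)^[q] y = x := by
    have hcycle := (hpz.apply_iterate k).eq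
    rwa [hk, iterate_succ_apply, Function.update_self] at hcycle
  exact absurd (exists_iterate_update_eq_iff.mp ⟨q, hxy⟩) (not_exists.mpr hy)

theorem IsAcyclic.iterate_ne_of_update (hf : IsAcyclic (update f x y)) (hy : y ≠ x) (k : ℕ) :
    f^[k] y ≠ x := by
  intro hk
  obtain ⟨j, hj⟩ := exists_iterate_update_eq_iff (y := y).mpr ⟨k, hk⟩
  have hx : IsPeriodicPt (update f x y) (j + 1) x := by
    rw [IsPeriodicPt, IsFixedPt, iterate_succ_apply, Function.update_self, hj]
  exact hy (by simpa [IsFixedPt] using hf (mk_mem_periodicPts j.succ_pos hx))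

end Update

section Counting

variable [Fintype α] [DecidableEq α]

def movedPts (f : α → α) : Finset α := {x | f x ≠ x}

@[simp] theorem mem_movedPts : x ∈ movedPts f ↔ f x ≠ x := by simp [movedPts]

theorem card_fixedPts_add_card_movedPts (f : α → α) :
    #{x | f x = x} + #(movedPts f) = Fintype.card α :=
  card_filter_add_card_filter_not _

theorem movedPts_update_self (hx : f x ≠ x) : movedPts (update f x x) = (movedPts f).erase x := by
  ext z
  by_cases hz : z = x <;> simp [hz, hx]

theorem movedPts_update (hy : y ≠ x) :
    movedPts (update f x y) = insert x (movedPts f) := by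
  ext z
  by_cases hz : z = x <;> simp [hz, hy]

open Classical in
/-- The edges `x ⟶ y` whose addition keeps the forest `f` a forest. -/
noncomputable def graftEdges (f : α → α) : Finset (α × α) :=
  {e | f e.1 = e.1 ∧ ∀ k, f^[k] e.2 ≠ e.1}

theorem mem_graftEdges {e : α × α} :
    e ∈ graftEdges f ↔ f e.1 = e.1 ∧ ∀ k, f^[k] e.2 ≠ e.1 := by
  simp [graftEdges]

open Classical in
/-- Every point lies below exactly one root. -/
theorem IsAcyclic.card_filter_exists_iterate_eq_fst (hf : IsAcyclic f) :
    #{e ∈ ({x | f x = x} : Finset α) ×ˢ univ | ∃ k, f^[k] e.2 = e.1} = Fintype.card α := by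
  refine card_nbij Prod.snd (fun _ _ => mem_univ _) ?_ ?_
  · rintro ⟨x, y⟩ hxy ⟨x', y'⟩ hxy' (rfl : y = y')
    simp only [mem_coe, mem_filter, mem_product, mem_univ, and_true, true_and] at hxy hxy'
    obtain ⟨hx, k, rfl⟩ := hxy
    obtain ⟨hx', k', rfl⟩ := hxy'
    rw [IsFixedPt.iterate_eq_of_isFixedPt_iterate hx hx']
  · intro y _
    obtain ⟨k, hk⟩ := hf.exists_isFixedPt_iterate y
    refine ⟨(f^[k] y, y), ?_, rfl⟩
    simp only [mem_coe, mem_filter, mem_product, mem_univ, and_true, true_and]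
    exact ⟨hk, k, rfl⟩

theorem IsAcyclic.card_graftEdges (hf : IsAcyclic f) :
    #(graftEdges f) = Fintype.card α * (Fintype.card α - #(movedPts f) - 1) := by
  set roots : Finset α := {x | f x = x}
  have hroots : #roots + #(movedPts f) = Fintype.card α := card_fixedPts_add_card_movedPts f
  classical
  set pairs : Finset (α × α) := roots ×ˢ univ
  have hsplit : graftEdges f = pairs \ {e ∈ pairs | ∃ k, f^[k] e.2 = e.1} := by
    ext e
    simp only [mem_graftEdges, mem_sdiff, mem_filter, mem_product, mem_univ, and_true, not_and,
      not_exists, pairs, roots]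
    tauto
  rw [hsplit, card_sdiff_of_subset (filter_subset _ _), hf.card_filter_exists_iterate_eq_fst,
    card_product, card_univ, ← Nat.sub_one_mul, Nat.mul_comm]
  congr 1
  omega

theorem IsAcyclic.mk_mem_graftEdges_update_self (hf : IsAcyclic f) (hx : f x ≠ x) :
    (x, f x) ∈ graftEdges (update f x x) :=
  mem_graftEdges.mpr ⟨Function.update_self x x f, IsAcyclic.iterate_ne_of_update (by simpa) hx⟩

variable (α) in
open Classical in
noncomputable def acyclicMaps (d : ℕ) : Finset (α → α) :=
  {f | IsAcyclic f ∧ #(movedPts f) = d}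

theorem mem_acyclicMaps {d : ℕ} : f ∈ acyclicMaps α d ↔ IsAcyclic f ∧ #(movedPts f) = d := by
  simp [acyclicMaps]

/-- Deleting the edge out of a non-root `x` and grafting a root `x` onto `y` are inverse
operations, so both sides count the same pairs (forest, edge). -/
theorem card_acyclicMaps_succ_mul (d : ℕ) :
    #(acyclicMaps α (d + 1)) * (d + 1) =
      #(acyclicMaps α d) * (Fintype.card α * (Fintype.card α - d - 1)) := by
  have hmoved :
      #((acyclicMaps α (d + 1)).sigma movedPts) = #(acyclicMaps α (d + 1)) * (d + 1) := by
    rw [card_sigma, sum_const_nat fun f hf => (mem_acyclicMaps.mp hf).2]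
  have hgraft : #((acyclicMaps α d).sigma graftEdges) =
      #(acyclicMaps α d) * (Fintype.card α * (Fintype.card α - d - 1)) := by
    refine (card_sigma _ _).trans (sum_const_nat fun f hf => ?_)
    obtain ⟨hf, hd⟩ := mem_acyclicMaps.mp hf
    rw [hf.card_graftEdges, hd]
  rw [← hmoved, ← hgraft]
  refine card_nbij' (fun p => ⟨update p.1 p.2 p.2, (p.2, p.1 p.2)⟩)
    (fun q => ⟨update q.1 q.2.1 q.2.2, q.2.1⟩) ?_ ?_ ?_ ?_
  · rintro ⟨f, x⟩ hp
    simp only [mem_coe, mem_sigma, mem_acyclicMaps, mem_movedPts] at hp ⊢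
    obtain ⟨⟨hf, hd⟩, hx⟩ := hp
    refine ⟨⟨hf.update_self x, ?_⟩, hf.mk_mem_graftEdges_update_self hx⟩
    rw [movedPts_update_self hx, card_erase_of_mem (mem_movedPts.mpr hx), hd, Nat.add_sub_cancel]
  · rintro ⟨f, x, y⟩ hq
    simp only [mem_coe, mem_sigma, mem_acyclicMaps, mem_movedPts, mem_graftEdges] at hq ⊢
    obtain ⟨⟨hf, hd⟩, hx, hy⟩ := hq
    have hyx : y ≠ x := hy 0
    refine ⟨⟨hf.update_of_forall_iterate_ne hy, ?_⟩, by simpa using hyx⟩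
    rw [movedPts_update hyx, card_insert_of_notMem (by simpa using hx), hd]
  · rintro ⟨f, x⟩ -
    simp
  · rintro ⟨f, x, y⟩ hq
    simp only [mem_coe, mem_sigma, mem_graftEdges] at hq
    simp [hq.2.1]

theorem acyclicMaps_zero : acyclicMaps α 0 = {id} := by
  ext f
  simp only [mem_acyclicMaps, card_eq_zero, mem_singleton]
  constructor
  · rintro ⟨-, hf⟩
    funext x
    simpa using eq_empty_iff_forall_notMem.mp hf x
  · rintro rfl
    exact ⟨isAcyclic_id, by simp [movedPts]⟩

theorem card_acyclicMaps (d : ℕ) :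
    #(acyclicMaps α d) = Fintype.card α ^ d * (Fintype.card α - 1).choose d := by
  induction d with
  | zero => simp [acyclicMaps_zero]
  | succ d ih =>
    refine Nat.eq_of_mul_eq_mul_right d.succ_pos ?_
    rw [card_acyclicMaps_succ_mul, ih, mul_assoc _ _ (d + 1), Nat.choose_succ_right_eq,
      Nat.sub_right_comm]
    ring

theorem card_isAcyclic :
    Nat.card {f : α → α | IsAcyclic f} = (Fintype.card α + 1) ^ (Fintype.card α - 1) := by
  classical
  rw [Nat.card_coe_set_eq, Set.ncard_eq_toFinset_card', Set.toFinset_ofPred,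
    card_eq_sum_card_fiberwise (f := fun f => #(movedPts f)) (t := range (Fintype.card α + 1))
      fun f _ => mem_range.mpr (Nat.lt_succ_of_le (card_le_univ _))]
  calc ∑ d ∈ range (Fintype.card α + 1), #{f ∈ {f | IsAcyclic f} | #(movedPts f) = d}
      = ∑ d ∈ range (Fintype.card α + 1), #(acyclicMaps α d) := by
        refine sum_congr rfl fun d _ => congrArg card ?_
        ext f
        simp [mem_acyclicMaps]
    _ = _ := by simp only [card_acyclicMaps, Nat.sum_range_pow_mul_choose_pred]

end Counting

theorem card_setOf_bijective [Fintype α] :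
    Nat.card {f : α → α | Bijective f} = (Fintype.card α).factorial := by
  classical
  have hrange : {f : α → α | Bijective f} = Set.range (fun σ : Equiv.Perm α => ⇑σ) :=
    Set.ext fun f => ⟨fun hf => ⟨Equiv.ofBijective f hf, rfl⟩, by rintro ⟨σ, rfl⟩; exact σ.bijective⟩
  rw [hrange, Nat.card_range_of_injective DFunLike.coe_injective, Nat.card_eq_fintype_card,
    Fintype.card_perm]

end Function

open Function

theorem mem_iUnion_conjM_iff {n : ℕ} {f : Fin n → Fin n} :
    f ∈ ⋃ σ, conjM n σ ↔ IsAcyclic f := by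
  simp only [Set.mem_iUnion, conjM, Set.mem_image]
  constructor
  · rintro ⟨σ, h, hle, rfl⟩
    exact (isAcyclic_of_le_id hle).conj σ
  · intro hf
    obtain ⟨r, hr⟩ := hf.exists_rank
    set σ := Tuple.sort r
    refine ⟨σ, σ.symm ∘ f ∘ σ, fun i => ?_, by ext; simp⟩
    by_cases hfix : f (σ i) = σ i
    · simp [hfix]
    refine le_of_not_gt fun hlt => (hr _ hfix).not_ge ?_
    simpa [σ] using Tuple.monotone_sort r hlt.le

theorem cayley_union_count_general (n : ℕ) :
    Nat.card
        (({f : Fin n → Fin n | Function.Bijective f} ∪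
          ⋃ σ : Equiv.Perm (Fin n), conjM n σ : Set (Fin n → Fin n))) =
      (n + 1) ^ (n - 1) + Nat.factorial n - 1 := by
  have hacyclic : ⋃ σ : Equiv.Perm (Fin n), conjM n σ = {f | IsAcyclic f} :=
    Set.ext fun _ => mem_iUnion_conjM_iff
  have hinter : {f : Fin n → Fin n | Bijective f} ∩ {f | IsAcyclic f} = {id} := by
    ext f
    refine ⟨fun ⟨hbij, hf⟩ => hf.eq_id_of_injective hbij.injective, ?_⟩
    rintro rfl
    exact ⟨bijective_id, isAcyclic_id⟩
  have hcount := Set.ncard_union_add_ncard_inter {f : Fin n → Fin n | Bijective f}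
    {f | IsAcyclic f}
  rw [hinter, Set.ncard_singleton, ← Nat.card_coe_set_eq, ← Nat.card_coe_set_eq,
    card_setOf_bijective, ← Nat.card_coe_set_eq, card_isAcyclic, Fintype.card_fin] at hcount
  rw [hacyclic, Nat.add_comm _ n.factorial, ← hcount, Nat.add_sub_cancel]

/-- The counting identity from the proof of Proposition 3, part 1 (via Cayley's
formula): `|S_n ∪ ⋃_σ σ M_n σ⁻¹| = (n+1)^(n−1) + n! − 1`. -/
theorem cayley_union_count (n : ℕ) (hn : 1 ≤ n) :
    Nat.card
        (({f : Fin n → Fin n | Function.Bijective f} ∪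
          ⋃ σ : Equiv.Perm (Fin n), conjM n σ : Set (Fin n → Fin n))) =
      (n + 1) ^ (n - 1) + Nat.factorial n - 1 :=
  cayley_union_count_general n
end

section
/- For every integer n ≥ 2, the set {f : Z_n → Z_n | f is not bijective, or f is an even permutation} (that is, all functions except the odd permutations) is a proper submonoid of the monoid of all functions Z_n → Z_n under composition, and its cardinality is n^n − n!/2. In particular, the largest proper submonoid of this monoid has cardinality at least n^n − n!/2. -/
/-- All functions `Z_n → Z_n` except the odd permutations. -/
def noOddPerms (n : ℕ) : Set (Fin n → Fin n) :=
  {f : Fin n → Fin n | ¬Function.Bijective f ∨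
    ∃ σ : Equiv.Perm (Fin n), ⇑σ = f ∧ Equiv.Perm.sign σ = 1}

/-!
On a finite set, `f ∘ g` is bijective only if `f` and `g` are, and then its sign is the product
of theirs; so a composite of maps that are not odd permutations is never an odd permutation. The
excluded maps form the nontrivial coset of the alternating group, which has `n! / 2` elements.
-/

open Equiv Function Nat

theorem Equiv.Perm.ncard_compl_alternatingGroup {α : Type*} [Fintype α] [DecidableEq α]
    [Nontrivial α] :
    ((alternatingGroup α : Set (Perm α))ᶜ).ncard = (Fintype.card α)! / 2 := by
  have htwice := two_mul_card_alternatingGroup (α := α)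
  rw [Fintype.card_perm] at htwice
  rw [Set.ncard_compl, Nat.card_eq_fintype_card, Fintype.card_perm, ← Nat.card_coe_set_eq,
    SetLike.coe_sort_coe, Nat.card_eq_fintype_card]
  omega

theorem Function.Bijective.of_comp_of_finite {α : Type*} [Finite α] {f g : α → α}
    (h : Bijective (f ∘ g)) : Bijective f ∧ Bijective g :=
  ⟨Finite.surjective_iff_bijective.mp h.surjective.of_comp,
    Finite.injective_iff_bijective.mp h.injective.of_comp⟩

theorem mem_noOddPerms_iff {n : ℕ} {f : Fin n → Fin n} :
    f ∈ noOddPerms n ↔ ∀ σ : Perm (Fin n), ⇑σ = f → σ ∈ alternatingGroup (Fin n) := by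
  constructor
  · rintro (hf | ⟨τ, rfl, hτ⟩) σ hσ
    · exact absurd (hσ ▸ σ.bijective) hf
    · rwa [DFunLike.coe_injective hσ]
  · intro h
    by_cases hf : Bijective f
    · exact Or.inr ⟨ofBijective f hf, rfl, h _ rfl⟩
    · exact Or.inl hf

theorem isSubmonoidSet_noOddPerms (n : ℕ) : IsSubmonoidSet (noOddPerms n) := by
  refine ⟨mem_noOddPerms_iff.mpr fun σ hσ => ?_, fun f hf g hg => mem_noOddPerms_iff.mpr ?_⟩
  · rw [show σ = 1 from DFunLike.coe_injective hσ]
    exact one_mem _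
  · intro σ hσ
    obtain ⟨hfb, hgb⟩ := (hσ ▸ σ.bijective).of_comp_of_finite
    rw [show σ = ofBijective f hfb * ofBijective g hgb from DFunLike.coe_injective hσ]
    exact mul_mem (mem_noOddPerms_iff.mp hf _ rfl) (mem_noOddPerms_iff.mp hg _ rfl)

theorem compl_noOddPerms (n : ℕ) :
    (noOddPerms n)ᶜ = (⇑) '' (alternatingGroup (Fin n) : Set (Perm (Fin n)))ᶜ := by
  ext f
  simp only [Set.mem_compl_iff, mem_noOddPerms_iff, not_forall, Set.mem_image, SetLike.mem_coe]
  tauto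

/-- Proposition 3, part 3 (Submonoid sizes): the complement of the odd permutations
is a proper submonoid of the composition monoid `Z_n^{Z_n}` of cardinality
`n^n − n!/2`; in particular the largest proper submonoid has cardinality at least
`n^n − n!/2`. -/
theorem submonoid_sizes_part3 (n : ℕ) (hn : 2 ≤ n) :
    IsSubmonoidSet (noOddPerms n) ∧ noOddPerms n ≠ Set.univ ∧
      Nat.card (noOddPerms n) = n ^ n - Nat.factorial n / 2 := by
  have : Nontrivial (Fin n) := Fin.nontrivial_iff_two_le.mpr hn
  have hcompl : ((noOddPerms n)ᶜ).ncard = n ! / 2 := by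
    rw [compl_noOddPerms, Set.ncard_image_of_injective _ DFunLike.coe_injective,
      Perm.ncard_compl_alternatingGroup, Fintype.card_fin]
  have hpos : 0 < n ! / 2 := Nat.div_pos (hn.trans (self_le_factorial n)) two_pos
  refine ⟨isSubmonoidSet_noOddPerms n, fun huniv => ?_, ?_⟩
  · rw [huniv, Set.compl_univ, Set.ncard_empty] at hcompl
    omega
  · have htotal := Set.ncard_add_ncard_compl (noOddPerms n)
    rw [Nat.card_eq_fintype_card, Fintype.card_fun, Fintype.card_fin] at htotal
    rw [Nat.card_coe_set_eq]
    omega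
end
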